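/- Let A ∈ L²(Ω_1) ⊗ ⋯ ⊗ L²(Ω_d) and suppose that for each j the mode-j range of A equals the span of orthonormal functions u_{j,1},…,u_{j,r_j} in L²(Ω_j). Then A(z_1,…,z_d) = Σ_{ρ_1=1}^{r_1} ⋯ Σ_{ρ_d=1}^{r_d} A[u_{1,ρ_1},…,u_{d,ρ_d}] · u_{1,ρ_1}(z_1) ⋯ u_{d,ρ_d}(z_d). In particular, A is determined by a core tensor of size Π_j r_j. -/

import Mathlib

open MeasureTheory
open scoped RealInnerProductSpace InnerProductSpace ComplexConjugate

/-!
Put `e_ρ = u_{1,ρ_1} ⊗ ⋯ ⊗ u_{d,ρ_d}` and `S = Σ_ρ ⟪e_ρ, A⟫ e_ρ`. Since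
`⟪⊗ w, ⊗ w'⟫ = ∏ⱼ ⟪w_j, w'_j⟫`, the `e_ρ` are orthonormal. The functional `w ↦ ⟪A - S, ⊗ w⟫`
is multilinear; it vanishes when some `w_j` is orthogonal to all `u_{j,ρ}` (for `A` this is the
hypothesis, for `S` one factor of each `⟪e_ρ, ⊗ w⟫` vanishes) and at every tuple `(u_{j,ρ_j})_j`.
Splitting each `w_j` into its component in `span (u_{j,·})` and an orthogonal remainder and
expanding multilinearly, it vanishes identically. Finally, elementary tensors are total in
`L²(∏ Ω_j)`: tensors of indicators show that a function orthogonal to all of them has zero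
integral over every box with sides of finite measure, and by a π-system argument on the
σ-finite exhaustion by such boxes it vanishes almost everywhere.
-/

section Orthonormal

open Finset

theorem MultilinearMap.eq_zero_of_orthonormal {𝕜 ι F : Type*} [RCLike 𝕜] [Fintype ι]
    [DecidableEq ι]
    {E κ : ι → Type*} [∀ i, NormedAddCommGroup (E i)] [∀ i, InnerProductSpace 𝕜 (E i)]
    [∀ i, Fintype (κ i)] [AddCommGroup F] [Module 𝕜 F]
    (u : ∀ i, κ i → E i) (hu : ∀ i, Orthonormal 𝕜 (u i)) (f : MultilinearMap 𝕜 E F)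
    (hperp : ∀ w i, (∀ k, ⟪u i k, w i⟫_𝕜 = 0) → f w = 0)
    (hbasis : ∀ k : ∀ i, κ i, f (fun i => u i (k i)) = 0) : f = 0 := by
  ext w
  set p : ∀ i, E i := fun i => ∑ k, ⟪u i k, w i⟫_𝕜 • u i k
  have hq : ∀ i k, ⟪u i k, w i - p i⟫_𝕜 = 0 := fun i k => by
    rw [inner_sub_right, (hu i).inner_right_fintype, sub_self]
  calc f w = ∑ s : Finset ι, f (s.piecewise p (w - p)) := by
        rw [← f.map_add_univ, add_sub_cancel]
    _ = f p := by
      rw [sum_eq_single_of_mem univ (mem_univ _) ?_, piecewise_univ]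
      intro s _ hs
      obtain ⟨i, -, hi⟩ := exists_of_ssubset (ssubset_univ_iff.2 hs)
      exact hperp _ i (by rw [piecewise_eq_of_notMem _ _ _ hi]; exact hq i)
    _ = 0 := by simp only [p, map_sum, map_smul_univ, hbasis, smul_zero, sum_const_zero]

theorem Orthonormal.pi_of_inner_map_eq_prod {𝕜 ι H : Type*} [RCLike 𝕜] [Fintype ι]
    {E κ : ι → Type*} [∀ i, NormedAddCommGroup (E i)] [∀ i, InnerProductSpace 𝕜 (E i)]
    [NormedAddCommGroup H] [InnerProductSpace 𝕜 H] (T : (∀ i, E i) → H)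
    (hT : ∀ w w', ⟪T w, T w'⟫_𝕜 = ∏ i, ⟪w i, w' i⟫_𝕜)
    {u : ∀ i, κ i → E i} (hu : ∀ i, Orthonormal 𝕜 (u i)) :
    Orthonormal 𝕜 fun k : ∀ i, κ i => T fun i => u i (k i) := by
  classical
  rw [orthonormal_iff_ite]
  intro k k'
  simp only [hT, fun i => orthonormal_iff_ite.1 (hu i), prod_boole, mem_univ,
    true_implies, funext_iff]

theorem eq_sum_inner_smul_of_inner_map_eq_zero {𝕜 ι H : Type*} [RCLike 𝕜] [Fintype ι]
    [DecidableEq ι] {E κ : ι → Type*} [∀ i, NormedAddCommGroup (E i)]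
    [∀ i, InnerProductSpace 𝕜 (E i)] [∀ i, Fintype (κ i)]
    [NormedAddCommGroup H] [InnerProductSpace 𝕜 H] (T : MultilinearMap 𝕜 E H)
    (hT : ∀ w w', ⟪T w, T w'⟫_𝕜 = ∏ i, ⟪w i, w' i⟫_𝕜)
    (htotal : ∀ B : H, (∀ w, ⟪B, T w⟫_𝕜 = 0) → B = 0)
    {u : ∀ i, κ i → E i} (hu : ∀ i, Orthonormal 𝕜 (u i)) {A : H}
    (hA : ∀ w i, (∀ k, ⟪u i k, w i⟫_𝕜 = 0) → ⟪A, T w⟫_𝕜 = 0) :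
    A = ∑ k : ∀ i, κ i, ⟪T fun i => u i (k i), A⟫_𝕜 • T fun i => u i (k i) := by
  set e : (∀ i, κ i) → H := fun k => T fun i => u i (k i)
  set S := ∑ k, ⟪e k, A⟫_𝕜 • e k
  have he : Orthonormal 𝕜 e := Orthonormal.pi_of_inner_map_eq_prod T hT hu
  have hS : ∀ w, ⟪S, T w⟫_𝕜 = ∑ k, conj ⟪e k, A⟫_𝕜 * ∏ i, ⟪u i (k i), w i⟫_𝕜 := fun w => by
    simp only [S, sum_inner, inner_smul_left, e, hT]
  rw [← sub_eq_zero]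
  refine htotal _ fun w => ?_
  have hf := MultilinearMap.eq_zero_of_orthonormal u hu
    ((innerₛₗ 𝕜 (A - S)).compMultilinearMap T) ?_ ?_
  · exact congr($hf w)
  · intro w i hw
    rw [LinearMap.compMultilinearMap_apply, innerₛₗ_apply_apply, inner_sub_left, hA w i hw, hS,
      sum_eq_zero fun k _ => by rw [prod_eq_zero (mem_univ i) (hw (k i)),
        mul_zero], sub_zero]
  · intro k
    rw [LinearMap.compMultilinearMap_apply, innerₛₗ_apply_apply, inner_sub_left,
      he.inner_left_fintype, inner_conj_symm, sub_self]

end Orthonormal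

section Pi

open Set
open scoped ENNReal

variable {ι : Type*} [Fintype ι] {Ω : ι → Type*} [∀ i, MeasurableSpace (Ω i)]
  {μ : ∀ i, Measure (Ω i)} [∀ i, SigmaFinite (μ i)]

theorem ae_eq_zero_of_forall_setIntegral_univ_pi_eq_zero {E : Type*} [NormedAddCommGroup E]
    [NormedSpace ℝ E] [CompleteSpace E] {f : (∀ i, Ω i) → E}
    (hint : ∀ s : ∀ i, Set (Ω i), (∀ i, MeasurableSet (s i) ∧ μ i (s i) < ∞) →
      IntegrableOn f (univ.pi s) (Measure.pi μ))
    (hzero : ∀ s : ∀ i, Set (Ω i), (∀ i, MeasurableSet (s i) ∧ μ i (s i) < ∞) →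
      ∫ z in univ.pi s, f z ∂Measure.pi μ = 0) :
    f =ᵐ[Measure.pi μ] 0 := by
  let S := Measure.FiniteSpanningSetsIn.pi fun i =>
    ((μ i).toFiniteSpanningSetsIn.mono' fun s hs => hs :
      (μ i).FiniteSpanningSetsIn {s | MeasurableSet s ∧ μ i s < ∞})
  rw [Filter.EventuallyEq, ← Measure.restrict_univ (μ := Measure.pi μ), ← S.spanning,
    ae_restrict_iUnion_iff]
  intro n
  obtain ⟨s, hs, hSn⟩ := S.set_mem n
  have hs' : ∀ i, MeasurableSet (s i) ∧ μ i (s i) < ∞ := fun i => hs i (mem_univ i)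
  rw [← hSn]
  refine (hint s hs').ae_eq_of_withDensityᵥ_eq (integrable_zero _ _ _) ?_
  rw [withDensityᵥ_zero]
  -- the signed measure `t ↦ ∫ z in t ∩ univ.pi s, f z` vanishes on boxes, hence everywhere
  refine VectorMeasure.ext_of_generateFrom _ ?_ generateFrom_pi.symm isPiSystem_pi ?_
  · rintro _ ⟨t, ht, rfl⟩
    have ht' : ∀ i, MeasurableSet (t i) := fun i => ht i (mem_univ i)
    rw [withDensityᵥ_apply (hint s hs') (MeasurableSet.univ_pi ht'),
      Measure.restrict_restrict (MeasurableSet.univ_pi ht'), ← pi_inter_distrib,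
      zero_apply]
    exact hzero _ fun i => ⟨(ht' i).inter (hs' i).1,
      (measure_mono inter_subset_right).trans_lt (hs' i).2⟩
  · rw [withDensityᵥ_apply (hint s hs') MeasurableSet.univ, Measure.restrict_univ, hzero s hs',
      zero_apply]

variable (μ)

theorem memLp_two_fintype_prod (w : ∀ i, Lp ℝ 2 (μ i)) :
    MemLp (fun z : ∀ i, Ω i => ∏ i, w i (z i)) 2 (Measure.pi μ) := by
  have hmeas : AEStronglyMeasurable (fun z : ∀ i, Ω i => ∏ i, w i (z i)) (Measure.pi μ) :=
    Finset.aestronglyMeasurable_fun_prod _ fun i _ =>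
      (Lp.aestronglyMeasurable (w i)).comp_quasiMeasurePreserving
        (Measure.quasiMeasurePreserving_eval μ i)
  rw [memLp_two_iff_integrable_sq hmeas]
  simp_rw [← Finset.prod_pow]
  exact Integrable.fintype_prod_dep fun i =>
    (memLp_two_iff_integrable_sq (Lp.aestronglyMeasurable (w i))).1 (Lp.memLp (w i))

namespace MeasureTheory.L2

omit [∀ i, SigmaFinite (μ i)] in
theorem prod_update_apply [DecidableEq ι] (w : ∀ i, Lp ℝ 2 (μ i)) (i : ι)
    (v : Lp ℝ 2 (μ i)) (z : ∀ i, Ω i) :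
    ∏ j, Function.update w i v j (z j) = v (z i) * ∏ j ∈ Finset.univ.erase i, w j (z j) := by
  rw [← Finset.mul_prod_erase _ _ (Finset.mem_univ i), Function.update_self]
  exact congrArg _ (Finset.prod_congr rfl fun j hj => by
    rw [Function.update_of_ne (Finset.ne_of_mem_erase hj)])

noncomputable def tprod :
    MultilinearMap ℝ (fun i => Lp ℝ 2 (μ i)) (Lp ℝ 2 (Measure.pi μ)) where
  toFun w := (memLp_two_fintype_prod μ w).toLp _
  map_update_add' w i x y := by
    rw [← MemLp.toLp_add]
    refine MemLp.toLp_congr _ _ ?_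
    filter_upwards [Measure.tendsto_eval_ae_ae.eventually (Lp.coeFn_add x y)] with z hz
    simp only [prod_update_apply, Pi.add_apply, Function.eval] at hz ⊢
    rw [hz, add_mul]
  map_update_smul' w i c x := by
    rw [← MemLp.toLp_const_smul]
    refine MemLp.toLp_congr _ _ ?_
    filter_upwards [Measure.tendsto_eval_ae_ae.eventually (Lp.coeFn_smul c x)] with z hz
    simp only [prod_update_apply, Pi.smul_apply, Function.eval, smul_eq_mul] at hz ⊢
    rw [hz, mul_assoc]

theorem coeFn_tprod (w : ∀ i, Lp ℝ 2 (μ i)) :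
    tprod μ w =ᵐ[Measure.pi μ] fun z => ∏ i, w i (z i) :=
  (memLp_two_fintype_prod μ w).coeFn_toLp

theorem inner_tprod_right (f : Lp ℝ 2 (Measure.pi μ)) (w : ∀ i, Lp ℝ 2 (μ i)) :
    ⟪f, tprod μ w⟫ = ∫ z, f z * ∏ i, w i (z i) ∂Measure.pi μ := by
  rw [inner_def]
  refine integral_congr_ae ?_
  filter_upwards [coeFn_tprod μ w] with z hz
  rw [hz, RCLike.inner_apply, conj_trivial, mul_comm]

theorem inner_tprod_tprod (w w' : ∀ i, Lp ℝ 2 (μ i)) :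
    ⟪tprod μ w, tprod μ w'⟫ = ∏ i, ⟪w i, w' i⟫ := by
  calc ⟪tprod μ w, tprod μ w'⟫ = ∫ z, ∏ i, w i (z i) * w' i (z i) ∂Measure.pi μ := by
        rw [inner_tprod_right]
        refine integral_congr_ae ?_
        filter_upwards [coeFn_tprod μ w] with z hz
        rw [hz, Finset.prod_mul_distrib]
    _ = ∏ i, ∫ x, w i x * w' i x ∂μ i :=
        integral_fintype_prod_eq_prod fun i x => w i x * w' i x
    _ = ∏ i, ⟪w i, w' i⟫ := by
        simp only [inner_def, RCLike.inner_apply, conj_trivial, mul_comm]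

theorem eq_zero_of_forall_inner_tprod_eq_zero {B : Lp ℝ 2 (Measure.pi μ)}
    (hB : ∀ w, ⟪B, tprod μ w⟫ = 0) : B = 0 := by
  have hint : ∀ s : ∀ i, Set (Ω i), (∀ i, MeasurableSet (s i) ∧ μ i (s i) < ∞) →
      IntegrableOn B (univ.pi s) (Measure.pi μ) := fun s hs =>
    integrableOn_Lp_of_measure_ne_top B one_le_two
      (by rw [Measure.pi_pi]; exact (ENNReal.prod_lt_top fun i _ => (hs i).2).ne)
  rw [Lp.eq_zero_iff_ae_eq_zero]
  refine ae_eq_zero_of_forall_setIntegral_univ_pi_eq_zero hint fun s hs => ?_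
  let w : ∀ i, Lp ℝ 2 (μ i) := fun i => indicatorConstLp 2 (hs i).1 (hs i).2.ne 1
  have hw : ∀ᵐ z ∂Measure.pi μ, ∀ i, w i (z i) = (s i).indicator 1 (z i) :=
    ae_all_iff.2 fun i => Measure.tendsto_eval_ae_ae.eventually indicatorConstLp_coeFn
  rw [← hB w, inner_tprod_right, ← integral_indicator (MeasurableSet.univ_pi fun i => (hs i).1)]
  refine integral_congr_ae ?_
  filter_upwards [hw] with z hz
  rw [Finset.prod_congr rfl fun i _ => hz i, ← Set.indicator_pi_one_apply, Finset.coe_univ,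
    ← Set.indicator_mul_right]
  simp only [Pi.one_apply, mul_one]

end MeasureTheory.L2

end Pi

/-- **Core-tensor representation of a function with finite mode ranges.**
Let `A ∈ L²(Ω_1) ⊗ ⋯ ⊗ L²(Ω_d)` and suppose for each `j` the mode-`j` range of
`A` equals the span of orthonormal functions `u_{j,1},…,u_{j,r_j}` in `L²(Ω_j)`;
in particular `A` vanishes on the orthogonal complement of
`range_1(A) ⊗ ⋯ ⊗ range_d(A)` (hypothesis `hrange`: the contraction
`A[w_1,…,w_d]` is zero whenever some `w_j` is orthogonal to all `u_{j,ρ}`).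
Then `A = Σ_{ρ_1,…,ρ_d} A[u_{1,ρ_1},…,u_{d,ρ_d}] · u_{1,ρ_1} ⊗ ⋯ ⊗ u_{d,ρ_d}`,
so `A` is determined by a core tensor of size `Π_j r_j`. -/
theorem core_representation_of_finite_rank
    {d : ℕ} {Ω : Fin d → Type*} [∀ j, MeasurableSpace (Ω j)]
    (μ : ∀ j, Measure (Ω j)) [∀ j, SigmaFinite (μ j)]
    (r : Fin d → ℕ)
    (u : ∀ j, Fin (r j) → Lp ℝ 2 (μ j)) (hON : ∀ j, Orthonormal ℝ (u j))
    (A : Lp ℝ 2 (Measure.pi μ))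
    (hrange : ∀ (j : Fin d) (v : Lp ℝ 2 (μ j)),
      (∀ ρ, ⟪u j ρ, v⟫ = 0) →
        ∀ w : ∀ j', Lp ℝ 2 (μ j'), w j = v →
          (∫ z, A z * ∏ j', (w j' : Ω j' → ℝ) (z j') ∂(Measure.pi μ)) = 0)
    (U : (∀ j, Fin (r j)) → Lp ℝ 2 (Measure.pi μ))
    (hU : ∀ ρ : ∀ j, Fin (r j),
      (U ρ : (∀ j, Ω j) → ℝ)
        =ᵐ[Measure.pi μ] fun z => ∏ j, (u j (ρ j) : Ω j → ℝ) (z j)) :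
    A = ∑ ρ : ∀ j, Fin (r j),
        (∫ z, A z * ∏ j, (u j (ρ j) : Ω j → ℝ) (z j) ∂(Measure.pi μ)) • U ρ := by
  obtain rfl : U = fun ρ => L2.tprod μ fun j => u j (ρ j) :=
    funext fun ρ => Lp.ext ((hU ρ).trans (L2.coeFn_tprod μ _).symm)
  have hA : ∀ w j, (∀ ρ, ⟪u j ρ, w j⟫ = 0) → ⟪A, L2.tprod μ w⟫ = 0 := fun w j hw =>
    (L2.inner_tprod_right μ A w).trans (hrange j (w j) hw w rfl)
  conv_lhs => rw [eq_sum_inner_smul_of_inner_map_eq_zero (L2.tprod μ) (L2.inner_tprod_tprod μ)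
    (fun _ => L2.eq_zero_of_forall_inner_tprod_eq_zero μ) hON hA]
  refine Finset.sum_congr rfl fun ρ _ => ?_
  rw [real_inner_comm, L2.inner_tprod_right]
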